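/- arXiv:2201.13417 — 7 statements merged into one kernel-verified Lean document; each statement's English description precedes it below -/
import Mathlib

section
/- For 0 < p < 1 and ε > 0 with p + ε < 1, and α the least positive integer with (p/(p+ε))^α ≤ η (for given 0 < η < 1), if n ≥ (α(1+ε) - q)/(ε(p+ε)) where q = 1-p, then ((n - μ + α)/(n - α + 1))·(p/q) < p/(p+ε), where μ = ⌈np + nε⌉. -/
/-- Key quantitative inequality in Bernoulli's proof of the weak law. -/
theorem bernoulli_ratio_bound (p ε η q : ℝ) (α n : ℕ)
    (hp : 0 < p) (hε : 0 < ε) (hpε : p + ε < 1) (hη0 : 0 < η) (hη1 : η < 1)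
    (hq : q = 1 - p)
    (hα : 0 < α ∧ (p / (p + ε)) ^ α ≤ η ∧
      ∀ m : ℕ, 0 < m → (p / (p + ε)) ^ m ≤ η → α ≤ m)
    (hn : ((α : ℝ) * (1 + ε) - q) / (ε * (p + ε)) ≤ (n : ℝ)) :
    (((n : ℝ) - ⌈(n : ℝ) * p + (n : ℝ) * ε⌉₊ + α) / ((n : ℝ) - α + 1)) * (p / q) <
      p / (p + ε) := by
  obtain ⟨hα1, -, -⟩ := hα
  have hq0 : 0 < q := by rw [hq]; linarith
  have hpε0 : 0 < p + ε := by linarith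
  have hα1' : (1:ℝ) ≤ α := by exact_mod_cast hα1
  have h0 : (0:ℝ) < ε * (p + ε) := by positivity
  rw [div_le_iff₀ h0] at hn
  have hn1 : (1:ℝ) ≤ n := by
    rcases Nat.eq_zero_or_pos n with h | h
    · exfalso; rw [h] at hn; push_cast at hn; nlinarith
    · exact_mod_cast h
  have hden : (0:ℝ) < (n:ℝ) - α + 1 := by
    nlinarith [mul_nonneg (le_trans zero_le_one hn1) (by nlinarith : (0:ℝ) ≤ 1 - ε * (p + ε))]
  have hceil : (n:ℝ) * p + (n:ℝ) * ε ≤ (⌈(n:ℝ)*p + (n:ℝ)*ε⌉₊ : ℝ) := Nat.le_ceil _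
  have key : ((n:ℝ) - ⌈(n:ℝ)*p + (n:ℝ)*ε⌉₊ + α) * (p + ε) < q * ((n:ℝ) - α + 1) := by
    nlinarith [mul_nonneg (sub_nonneg.2 hceil) hpε0.le,
      mul_pos (mul_pos (lt_of_lt_of_le one_pos hn1) hq0) (show (0:ℝ) < 1 - p - ε by linarith)]
  rw [div_mul_div_comm, div_lt_div_iff₀ (by positivity) hpε0]
  nlinarith [mul_lt_mul_of_pos_left key hp]
end

section
/- For integers 1 ≤ j ≤ n and 0 < p < 1 with q = 1-p, the binomial upper tail satisfies P(S_n ≥ j) = C(n,j) p^j q^{n-j} · q · F(n+1, 1; j+1; p), where F is the Gauss hypergeometric series F(a,b;c;x) = Σ_{k≥0} ((a)_k (b)_k / (c)_k) x^k / k! with (a)_k the rising factorial (here the relevant series converges since 0 < p < 1). -/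
/-- Binomial lower tail equals the negative-binomial tail (finite polynomial identity). -/
lemma binom_lower_tail_negbinom (p : ℝ) (n : ℕ) : ∀ j : ℕ, 1 ≤ j → j ≤ n →
    ∑ m ∈ Finset.range j, (n.choose m : ℝ) * p ^ m * (1 - p) ^ (n - m)
      = (1 - p) ^ (n - j + 1) *
        ∑ m ∈ Finset.range j, (((n - j) + m).choose m : ℝ) * p ^ m := by
  intro j hj
  induction j, hj using Nat.le_induction with
  | base =>
    intro hn
    simp [show n - 1 + 1 = n by omega]
  | succ j hj ih =>
    intro hjn
    have hjn' : j ≤ n := by omega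
    have hd : n - j = (n - (j + 1)) + 1 := by omega
    set d := n - (j + 1) with hdd
    have key : ∑ m ∈ Finset.range (j + 1), ((d + m).choose m : ℝ) * p ^ m
        = ∑ m ∈ Finset.range (j + 1), ((d + 1 + m).choose m : ℝ) * p ^ m
          - p * ∑ m ∈ Finset.range j, ((d + 1 + m).choose m : ℝ) * p ^ m := by
      have h1 : ∑ m ∈ Finset.range (j + 1), (((d + 1 + m).choose m : ℝ) * p ^ m
            - ((d + m).choose m : ℝ) * p ^ m)
          = p * ∑ m ∈ Finset.range j, ((d + 1 + m).choose m : ℝ) * p ^ m := by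
        rw [Finset.sum_range_succ']
        have h0 : ((d + 1 + 0).choose 0 : ℝ) * p ^ 0 - ((d + 0).choose 0 : ℝ) * p ^ 0 = 0 := by
          simp
        rw [h0, add_zero, Finset.mul_sum]
        refine Finset.sum_congr rfl fun m _ => ?_
        have hpascal : (d + 1 + (m + 1)).choose (m + 1)
            = (d + 1 + m).choose m + (d + (m + 1)).choose (m + 1) := by
          rw [show d + 1 + (m + 1) = (d + 1 + m) + 1 from by omega,
            show d + (m + 1) = d + 1 + m from by omega, Nat.choose_succ_succ]
        rw [hpascal]
        push_cast
        ring
      rw [Finset.sum_sub_distrib] at h1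
      linarith [h1]
    rw [Finset.sum_range_succ, ih hjn', hd, key, Finset.sum_range_succ,
      show d + 1 + j = n from by omega]
    ring

/-- Bahadur's hypergeometric representation of the binomial upper tail:
`P(S_n ≥ j) = C(n,j) p^j q^(n-j) · q · F(n+1, 1; j+1; p)`. -/
theorem binomial_tail_hypergeometric (n j : ℕ) (p q : ℝ) (hp : 0 < p) (hp1 : p < 1)
    (hq : q = 1 - p) (hj : 1 ≤ j) (hjn : j ≤ n) :
    ∑ m ∈ Finset.Icc j n, (n.choose m : ℝ) * p ^ m * q ^ (n - m) =
      (n.choose j : ℝ) * p ^ j * q ^ (n - j) * q *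
        ∑' k : ℕ, (((n + 1).ascFactorial k : ℝ) * ((1 : ℕ).ascFactorial k : ℝ) /
          ((j + 1).ascFactorial k : ℝ)) * p ^ k / (k.factorial : ℝ) := by
  subst hq
  obtain ⟨N, rfl⟩ : ∃ N, n = j + N := ⟨n - j, by omega⟩
  have hq0 : (0 : ℝ) < 1 - p := by linarith
  have hnorm : ‖p‖ < 1 := by rw [Real.norm_eq_abs, abs_of_pos hp]; exact hp1
  have hC0 : (0 : ℝ) < ((j + N).choose j : ℝ) :=
    by exact_mod_cast Nat.choose_pos (Nat.le_add_right j N)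
  have hpj : (0 : ℝ) < p ^ j := pow_pos hp j
  -- the negative binomial series
  have h1 : HasSum (fun m : ℕ => ((m + N).choose N : ℝ) * p ^ m)
      (1 / (1 - p) ^ (N + 1)) := hasSum_choose_mul_geometric_of_norm_lt_one N hnorm
  have h2 : HasSum (fun k : ℕ => (((k + j) + N).choose N : ℝ) * p ^ (k + j))
      (1 / (1 - p) ^ (N + 1) - ∑ m ∈ Finset.range j, ((m + N).choose N : ℝ) * p ^ m) :=
    (hasSum_nat_add_iff' j).mpr h1
  have h3 := h2.div_const (((j + N).choose j : ℝ) * p ^ j)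
  -- identify the hypergeometric term
  have hterm : ∀ k : ℕ,
      (((j + N + 1).ascFactorial k : ℝ) * ((1 : ℕ).ascFactorial k : ℝ) /
          (((j + 1).ascFactorial k : ℝ))) * p ^ k / (k.factorial : ℝ)
        = (((k + j) + N).choose N : ℝ) * p ^ (k + j) /
            (((j + N).choose j : ℝ) * p ^ j) := by
    intro k
    have e1 : ((j + N).factorial : ℝ) * ((j + N + 1).ascFactorial k : ℝ)
        = ((j + N + k).factorial : ℝ) := by
      exact_mod_cast congrArg (Nat.cast : ℕ → ℝ) (Nat.factorial_mul_ascFactorial (j + N) k)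
    have e2 : ((j).factorial : ℝ) * ((j + 1).ascFactorial k : ℝ)
        = ((j + k).factorial : ℝ) := by
      exact_mod_cast congrArg (Nat.cast : ℕ → ℝ) (Nat.factorial_mul_ascFactorial j k)
    rw [Nat.one_ascFactorial,
      Nat.cast_choose ℝ (Nat.le_add_left N (k + j)),
      Nat.cast_choose ℝ (Nat.le_add_right j N)]
    rw [show k + j + N - N = k + j from by omega, show j + N - j = N from by omega]
    have f1 : ((j + N).factorial : ℝ) ≠ 0 := by positivity
    have f2 : ((j).factorial : ℝ) ≠ 0 := by positivity
    have f3 : ((k).factorial : ℝ) ≠ 0 := by positivity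
    have f4 : ((j + k).factorial : ℝ) ≠ 0 := by positivity
    have f5 : ((N).factorial : ℝ) ≠ 0 := by positivity
    have f6 : ((k + j).factorial : ℝ) ≠ 0 := by positivity
    have f7 : ((k + j + N).factorial : ℝ) ≠ 0 := by positivity
    have hkj : ((k + j).factorial : ℝ) = ((j + k).factorial : ℝ) := by
      rw [add_comm]
    have ea : ((j + N + 1).ascFactorial k : ℝ)
        = ((j + N + k).factorial : ℝ) / ((j + N).factorial : ℝ) := by
      field_simp [mul_comm] at e1 ⊢; linarith [e1]
    have eb : ((j + 1).ascFactorial k : ℝ)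
        = ((j + k).factorial : ℝ) / ((j).factorial : ℝ) := by
      field_simp [mul_comm] at e2 ⊢; linarith [e2]
    rw [ea, eb, hkj, show j + N + k = k + j + N from by omega, pow_add]
    field_simp
  have htsum : (∑' k : ℕ, (((j + N + 1).ascFactorial k : ℝ) *
        ((1 : ℕ).ascFactorial k : ℝ) / (((j + 1).ascFactorial k : ℝ))) * p ^ k /
        (k.factorial : ℝ))
      = (1 / (1 - p) ^ (N + 1) - ∑ m ∈ Finset.range j, ((m + N).choose N : ℝ) * p ^ m) /
          (((j + N).choose j : ℝ) * p ^ j) :=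
    (tsum_congr hterm).trans h3.tsum_eq
  rw [htsum, show j + N - j = N from by omega]
  -- split total sum
  have htotal : ∑ m ∈ Finset.range ((j + N) + 1),
      ((j + N).choose m : ℝ) * p ^ m * (1 - p) ^ (j + N - m) = 1 := by
    have h := add_pow p (1 - p) (j + N)
    have h2 : ∑ m ∈ Finset.range ((j + N) + 1),
        ((j + N).choose m : ℝ) * p ^ m * (1 - p) ^ (j + N - m) = (p + (1 - p)) ^ (j + N) := by
      rw [h]; exact Finset.sum_congr rfl fun m _ => by ring
    rw [h2, show p + (1 - p) = (1 : ℝ) from by ring, one_pow]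
  have hsplit : ∑ m ∈ Finset.range j, ((j + N).choose m : ℝ) * p ^ m * (1 - p) ^ (j + N - m)
      + ∑ m ∈ Finset.Icc j (j + N), ((j + N).choose m : ℝ) * p ^ m * (1 - p) ^ (j + N - m)
      = 1 := by
    have h := Finset.sum_range_add_sum_Ico
      (fun m => ((j + N).choose m : ℝ) * p ^ m * (1 - p) ^ (j + N - m))
      (show j ≤ (j + N) + 1 by omega)
    rw [Finset.Ico_add_one_right_eq_Icc, htotal] at h
    exact h
  -- lower tail identity
  have hlow := binom_lower_tail_negbinom p (j + N) j hj (Nat.le_add_right j N)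
  rw [show j + N - j = N from by omega] at hlow
  have hsymm : ∀ m : ℕ, ((N + m).choose m : ℕ) = (m + N).choose N := by
    intro m
    rw [add_comm m N, ← Nat.choose_symm (Nat.le_add_right N m),
      show N + m - N = m from by omega]
  have hlow' : ∑ m ∈ Finset.range j, ((j + N).choose m : ℝ) * p ^ m * (1 - p) ^ (j + N - m)
      = (1 - p) ^ (N + 1) * ∑ m ∈ Finset.range j, ((m + N).choose N : ℝ) * p ^ m := by
    rw [hlow]
    congr 1
    exact Finset.sum_congr rfl fun m _ => by rw [hsymm m]
  have hLHS : ∑ m ∈ Finset.Icc j (j + N),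
      ((j + N).choose m : ℝ) * p ^ m * (1 - p) ^ (j + N - m)
      = 1 - (1 - p) ^ (N + 1) * ∑ m ∈ Finset.range j, ((m + N).choose N : ℝ) * p ^ m := by
    rw [← hlow']; linarith [hsplit]
  rw [hLHS]
  have hq1 : (1 - p) ^ (N + 1) ≠ 0 := by positivity
  field_simp
  ring
end

section
/- (Beatty's theorem) Let α, β > 1 be irrational real numbers with 1/α + 1/β = 1. Then the sets {⌊nα⌋ : n ≥ 1} and {⌊nβ⌋ : n ≥ 1} are disjoint and their union is the set of all positive integers. -/
/-! For `1/α + 1/β = 1` with `α > 1`, the sequences `⌊kα⌋` and `⌈kβ⌉ - 1` (`k > 0`) partition the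
positive integers (`beattySeq_symmDiff_beattySeq'_pos`); when `β` is irrational, `kβ` is never an
integer, so `⌈kβ⌉ - 1 = ⌊kβ⌋`. -/

theorem setOf_floor_natCast_mul_pos_eq (r : ℝ) :
    {m : ℤ | ∃ n : ℕ, 0 < n ∧ ⌊(n : ℝ) * r⌋ = m} = {beattySeq r k | k > 0} := by
  ext m
  constructor
  · rintro ⟨n, hn, rfl⟩
    exact ⟨n, Int.natCast_pos.mpr hn, by simp [beattySeq]⟩
  · rintro ⟨k, hk, rfl⟩
    lift k to ℕ using hk.le
    exact ⟨k, Int.natCast_pos.mp hk, by simp [beattySeq]⟩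

theorem disjoint_beattySeq_pos_beattySeq'_pos {r s : ℝ} (hrs : r.HolderConjugate s) :
    Disjoint {beattySeq r k | k > 0} {beattySeq' s k | k > 0} := by
  refine (disjoint_compl_right (a := {beattySeq r k | k})).mono ?_ ?_
  · rintro _ ⟨k, -, rfl⟩
    exact ⟨k, rfl⟩
  · rintro _ ⟨k, -, rfl⟩
    rw [compl_beattySeq hrs]
    exact ⟨k, rfl⟩

theorem beatty_theorem_general (α β : ℝ) (hα : 1 < α)
    (hirrβ : Irrational β)
    (hsum : 1 / α + 1 / β = 1) :
    {m : ℤ | ∃ n : ℕ, 0 < n ∧ ⌊(n : ℝ) * α⌋ = m} ∩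
      {m : ℤ | ∃ n : ℕ, 0 < n ∧ ⌊(n : ℝ) * β⌋ = m} = ∅ ∧
    {m : ℤ | ∃ n : ℕ, 0 < n ∧ ⌊(n : ℝ) * α⌋ = m} ∪
      {m : ℤ | ∃ n : ℕ, 0 < n ∧ ⌊(n : ℝ) * β⌋ = m} = {m : ℤ | 0 < m} := by
  have hαβ : α.HolderConjugate β :=
    Real.holderConjugate_iff.mpr ⟨hα, by simpa only [one_div] using hsum⟩
  have hdisj := disjoint_beattySeq_pos_beattySeq'_pos hαβ
  rw [setOf_floor_natCast_mul_pos_eq, setOf_floor_natCast_mul_pos_eq, ← hirrβ.beattySeq'_pos_eq]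
  refine ⟨Set.disjoint_iff_inter_eq_empty.mp hdisj, ?_⟩
  exact hdisj.symmDiff_eq_sup.symm.trans (beattySeq_symmDiff_beattySeq'_pos hαβ)

/-- Beatty's theorem: if `α, β > 1` are irrational with `1/α + 1/β = 1`, then the
Beatty sequences `⌊nα⌋` and `⌊nβ⌋` partition the positive integers. -/
theorem beatty_theorem (α β : ℝ) (hα : 1 < α) (hβ : 1 < β)
    (hirrα : Irrational α) (hirrβ : Irrational β)
    (hsum : 1 / α + 1 / β = 1) :
    {m : ℤ | ∃ n : ℕ, 0 < n ∧ ⌊(n : ℝ) * α⌋ = m} ∩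
      {m : ℤ | ∃ n : ℕ, 0 < n ∧ ⌊(n : ℝ) * β⌋ = m} = ∅ ∧
    {m : ℤ | ∃ n : ℕ, 0 < n ∧ ⌊(n : ℝ) * α⌋ = m} ∪
      {m : ℤ | ∃ n : ℕ, 0 < n ∧ ⌊(n : ℝ) * β⌋ = m} = {m : ℤ | 0 < m} :=
  beatty_theorem_general α β hα hirrβ hsum
end

section
/- (Uspensky, 1927) There do not exist real numbers α, β, γ > 1 such that the three Beatty sequences {⌊nα⌋ : n ≥ 1}, {⌊nβ⌋ : n ≥ 1}, {⌊nγ⌋ : n ≥ 1} are pairwise disjoint and their union equals the set of all positive integers. -/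
open Finset

/-- Simultaneous Dirichlet approximation via pigeonhole. -/
lemma simul_dirichlet_core (θ φ ε : ℝ) (hε : 0 < ε) :
    ∃ (N p q : ℤ), 1 ≤ N ∧ |(N : ℝ) * θ - p| < ε ∧ |(N : ℝ) * φ - q| < ε := by
  obtain ⟨K, hK⟩ := exists_nat_gt (1 / ε)
  have hK0 : 0 < (K : ℝ) := lt_trans (by positivity) hK
  have hKε : 1 / (K : ℝ) < ε := by
    rw [div_lt_iff₀ hK0]
    rw [div_lt_iff₀ hε] at hK
    linarith [mul_comm ε (K : ℝ)]
  set f : ℕ → ℤ × ℤ := fun n =>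
    (⌊(K : ℝ) * Int.fract ((n : ℝ) * θ)⌋, ⌊(K : ℝ) * Int.fract ((n : ℝ) * φ)⌋) with hf
  have hmaps : ∀ n ∈ Finset.range (K * K + 1),
      f n ∈ (Finset.Ico (0 : ℤ) K) ×ˢ (Finset.Ico (0 : ℤ) K) := by
    intro n _
    simp only [Finset.mem_product, Finset.mem_Ico]
    constructor <;>
    · constructor
      · exact Int.floor_nonneg.mpr (mul_nonneg hK0.le (Int.fract_nonneg _))
      · apply Int.floor_lt.mpr
        push_cast
        nlinarith [Int.fract_lt_one ((n : ℝ) * θ), Int.fract_lt_one ((n : ℝ) * φ),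
          Int.fract_nonneg ((n : ℝ) * θ), Int.fract_nonneg ((n : ℝ) * φ)]
  have hcard : ((Finset.Ico (0 : ℤ) K) ×ˢ (Finset.Ico (0 : ℤ) K)).card
      < (Finset.range (K * K + 1)).card := by
    simp [Int.card_Ico]
  obtain ⟨a, ha, b, hb, hab, hfab⟩ :=
    Finset.exists_ne_map_eq_of_card_lt_of_maps_to hcard hmaps
  -- WLOG a < b
  wlog h : a < b generalizing a b
  · exact this b hb a ha hab.symm hfab.symm (by omega)
  have key : ∀ x y : ℝ, ⌊(K : ℝ) * Int.fract x⌋ = ⌊(K : ℝ) * Int.fract y⌋ →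
      |Int.fract x - Int.fract y| < 1 / K := by
    intro x y hxy
    rw [abs_sub_lt_iff]
    have h1 := Int.floor_le ((K : ℝ) * Int.fract x)
    have h2 := Int.lt_floor_add_one ((K : ℝ) * Int.fract x)
    have h3 := Int.floor_le ((K : ℝ) * Int.fract y)
    have h4 := Int.lt_floor_add_one ((K : ℝ) * Int.fract y)
    rw [hxy] at h1 h2
    constructor <;> rw [lt_div_iff₀ hK0] <;> nlinarith
  have hfθ := key ((a : ℝ) * θ) ((b : ℝ) * θ) (congrArg Prod.fst hfab)
  have hfφ := key ((a : ℝ) * φ) ((b : ℝ) * φ) (congrArg Prod.snd hfab)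
  refine ⟨(b : ℤ) - a, ⌊(b : ℝ) * θ⌋ - ⌊(a : ℝ) * θ⌋, ⌊(b : ℝ) * φ⌋ - ⌊(a : ℝ) * φ⌋,
    by omega, ?_, ?_⟩
  · have : ((((b : ℤ) - a : ℤ)) : ℝ) * θ - ((⌊(b : ℝ) * θ⌋ - ⌊(a : ℝ) * θ⌋ : ℤ) : ℝ)
        = Int.fract ((b : ℝ) * θ) - Int.fract ((a : ℝ) * θ) := by
      unfold Int.fract; push_cast; ring
    rw [this]
    calc |Int.fract ((b : ℝ) * θ) - Int.fract ((a : ℝ) * θ)|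
        = |Int.fract ((a : ℝ) * θ) - Int.fract ((b : ℝ) * θ)| := abs_sub_comm _ _
      _ < 1 / K := hfθ
      _ < ε := hKε
  · have : ((((b : ℤ) - a : ℤ)) : ℝ) * φ - ((⌊(b : ℝ) * φ⌋ - ⌊(a : ℝ) * φ⌋ : ℤ) : ℝ)
        = Int.fract ((b : ℝ) * φ) - Int.fract ((a : ℝ) * φ) := by
      unfold Int.fract; push_cast; ring
    rw [this]
    calc |Int.fract ((b : ℝ) * φ) - Int.fract ((a : ℝ) * φ)|
        = |Int.fract ((a : ℝ) * φ) - Int.fract ((b : ℝ) * φ)| := abs_sub_comm _ _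
      _ < 1 / K := hfφ
      _ < ε := hKε

lemma simul_dirichlet (θ φ ε : ℝ) (hε : 0 < ε) :
    ∃ (N p q : ℤ), 3 ≤ N ∧ |(N : ℝ) * θ - p| < ε ∧ |(N : ℝ) * φ - q| < ε := by
  obtain ⟨N, p, q, hN, h1, h2⟩ := simul_dirichlet_core θ φ (ε / 4) (by positivity)
  refine ⟨4 * N, 4 * p, 4 * q, by omega, ?_, ?_⟩
  · have h : (((4 * N : ℤ)) : ℝ) * θ - ((4 * p : ℤ) : ℝ) = 4 * ((N : ℝ) * θ - p) := by
      push_cast; ring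
    rw [h, abs_mul]
    rw [show |(4:ℝ)| = 4 by norm_num]
    linarith
  · have h : (((4 * N : ℤ)) : ℝ) * φ - ((4 * q : ℤ) : ℝ) = 4 * ((N : ℝ) * φ - q) := by
      push_cast; ring
    rw [h, abs_mul]
    rw [show |(4:ℝ)| = 4 by norm_num]
    linarith
open scoped Classical

/-- The number of Beatty-sequence elements in `[1, N]`. -/
lemma beatty_count (α : ℝ) (hα : 1 < α) (N : ℤ) (hN : 0 < N) :
    ((Finset.Icc (1 : ℤ) N).filter
      (fun m => ∃ n : ℕ, 0 < n ∧ ⌊(n : ℝ) * α⌋ = m)).card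
      = (⌈((N : ℝ) + 1) / α⌉ - 1).toNat := by
  have hα0 : 0 < α := lt_trans one_pos hα
  set K : ℤ := ⌈((N : ℝ) + 1) / α⌉ - 1 with hK
  have hset : (Finset.Icc (1 : ℤ) N).filter
      (fun m => ∃ n : ℕ, 0 < n ∧ ⌊(n : ℝ) * α⌋ = m)
      = (Finset.Icc (1 : ℤ) K).image (fun n : ℤ => ⌊(n : ℝ) * α⌋) := by
    ext m
    simp only [Finset.mem_filter, Finset.mem_image, Finset.mem_Icc]
    constructor
    · rintro ⟨⟨hm1, hmN⟩, n, hn0, hnm⟩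
      refine ⟨(n : ℤ), ⟨by exact_mod_cast hn0, ?_⟩, by exact_mod_cast hnm⟩
      -- n ≤ K, i.e. n < ⌈(N+1)/α⌉
      have h1 : (n : ℝ) * α < (N : ℝ) + 1 := by
        have := Int.floor_le ((n : ℝ) * α)
        rw [hnm] at this
        have : (m : ℝ) ≤ (n : ℝ) * α := Int.floor_le ((n:ℝ)*α) |>.trans_eq' (by rw [hnm])
        have hlt := Int.lt_floor_add_one ((n : ℝ) * α)
        rw [hnm] at hlt
        have : (m : ℝ) + 1 ≤ (N : ℝ) + 1 := by exact_mod_cast by omega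
        linarith
      have h2 : ((n : ℤ) : ℝ) < ((N : ℝ) + 1) / α := by
        rw [lt_div_iff₀ hα0]; push_cast; linarith
      have := Int.lt_ceil.mpr h2
      omega
    · rintro ⟨n, ⟨hn1, hnK⟩, hnm⟩
      have hn1R : (1 : ℝ) ≤ (n : ℝ) := by exact_mod_cast hn1
      have hnα : α ≤ (n : ℝ) * α := by nlinarith
      have hub : (n : ℝ) * α < (N : ℝ) + 1 := by
        have h2 : n < ⌈((N : ℝ) + 1) / α⌉ := by omega
        have := Int.lt_ceil.mp h2
        rw [lt_div_iff₀ hα0] at this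
        linarith [this]
      refine ⟨⟨?_, ?_⟩, ⟨n.toNat, ?_, ?_⟩⟩
      · rw [← hnm]
        exact Int.le_floor.mpr (by push_cast; linarith)
      · rw [← hnm]
        exact Int.le_of_lt_add_one (Int.floor_lt.mpr (by push_cast; linarith))
      · omega
      · rw [← hnm]
        have hcast : ((n.toNat : ℕ) : ℝ) = ((n : ℤ) : ℝ) := by
          exact_mod_cast Int.toNat_of_nonneg (by omega : (0:ℤ) ≤ n)
        rw [hcast]
  rw [hset, Finset.card_image_of_injOn, Int.card_Icc]
  · congr 1; omega
  · have hmono : ∀ a b : ℤ, 1 ≤ a → a < b → ⌊(a : ℝ) * α⌋ < ⌊(b : ℝ) * α⌋ := by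
      intro a b ha1 hab
      have h1 : ((a : ℝ)) + 1 ≤ (b : ℝ) := by exact_mod_cast hab
      have ha0 : (0 : ℝ) ≤ (a : ℝ) := by exact_mod_cast (by omega : (0:ℤ) ≤ a)
      have h2 : (⌊(a : ℝ) * α⌋ : ℝ) ≤ (a : ℝ) * α := Int.floor_le _
      have h3 : ((⌊(a : ℝ) * α⌋ + 1 : ℤ) : ℝ) ≤ (b : ℝ) * α := by push_cast; nlinarith
      have := Int.le_floor.mpr h3
      omega
    intro a ha b hb hab
    simp only [Finset.coe_Icc, Set.mem_Icc] at ha hb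
    have hab' : ⌊(a : ℝ) * α⌋ = ⌊(b : ℝ) * α⌋ := hab
    by_contra hne
    rcases lt_or_gt_of_ne hne with h | h
    · have := hmono a b ha.1 h; omega
    · have := hmono b a hb.1 h; omega
/-- Uspensky's theorem (1927): no three Beatty sequences can partition the
positive integers. -/
theorem uspensky_no_three_beatty :
    ¬ ∃ α β γ : ℝ, 1 < α ∧ 1 < β ∧ 1 < γ ∧
      ({m : ℤ | ∃ n : ℕ, 0 < n ∧ ⌊(n : ℝ) * α⌋ = m} ∩
        {m : ℤ | ∃ n : ℕ, 0 < n ∧ ⌊(n : ℝ) * β⌋ = m} = ∅) ∧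
      ({m : ℤ | ∃ n : ℕ, 0 < n ∧ ⌊(n : ℝ) * α⌋ = m} ∩
        {m : ℤ | ∃ n : ℕ, 0 < n ∧ ⌊(n : ℝ) * γ⌋ = m} = ∅) ∧
      ({m : ℤ | ∃ n : ℕ, 0 < n ∧ ⌊(n : ℝ) * β⌋ = m} ∩
        {m : ℤ | ∃ n : ℕ, 0 < n ∧ ⌊(n : ℝ) * γ⌋ = m} = ∅) ∧
      ({m : ℤ | ∃ n : ℕ, 0 < n ∧ ⌊(n : ℝ) * α⌋ = m} ∪
        {m : ℤ | ∃ n : ℕ, 0 < n ∧ ⌊(n : ℝ) * β⌋ = m} ∪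
        {m : ℤ | ∃ n : ℕ, 0 < n ∧ ⌊(n : ℝ) * γ⌋ = m} = {m : ℤ | 0 < m}) := by
  rintro ⟨α, β, γ, hα, hβ, hγ, hAB, hAC, hBC, hU⟩
  have hα0 : 0 < α := lt_trans one_pos hα
  have hβ0 : 0 < β := lt_trans one_pos hβ
  have hγ0 : 0 < γ := lt_trans one_pos hγ
  set PA := fun m : ℤ => ∃ n : ℕ, 0 < n ∧ ⌊(n : ℝ) * α⌋ = m with hPA
  set PB := fun m : ℤ => ∃ n : ℕ, 0 < n ∧ ⌊(n : ℝ) * β⌋ = m with hPB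
  set PC := fun m : ℤ => ∃ n : ℕ, 0 < n ∧ ⌊(n : ℝ) * γ⌋ = m with hPC
  -- Step 1: counting identity
  have hcount : ∀ N : ℤ, 0 < N →
      (⌈((N : ℝ) + 1) / α⌉ - 1) + (⌈((N : ℝ) + 1) / β⌉ - 1)
        + (⌈((N : ℝ) + 1) / γ⌉ - 1) = N := by
    intro N hN
    set fA := (Finset.Icc (1 : ℤ) N).filter PA with hfA
    set fB := (Finset.Icc (1 : ℤ) N).filter PB with hfB
    set fC := (Finset.Icc (1 : ℤ) N).filter PC with hfC
    have hunion : fA ∪ fB ∪ fC = Finset.Icc (1 : ℤ) N := by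
      rw [hfA, hfB, hfC, ← Finset.filter_or, ← Finset.filter_or]
      apply Finset.filter_true_of_mem
      intro m hm
      have hm0 : 0 < m := (Finset.mem_Icc.mp hm).1
      have : m ∈ ({m : ℤ | PA m} ∪ {m : ℤ | PB m} ∪ {m : ℤ | PC m}) := by
        rw [hU]; exact hm0
      simpa [Set.mem_union] using this
    have hdAB : Disjoint fA fB := by
      rw [Finset.disjoint_left]
      intro m hmA hmB
      have h1 : PA m := (Finset.mem_filter.mp hmA).2
      have h2 : PB m := (Finset.mem_filter.mp hmB).2
      have : m ∈ ({m : ℤ | PA m} ∩ {m : ℤ | PB m}) := ⟨h1, h2⟩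
      rw [hAB] at this
      exact this
    have hdAC : Disjoint fA fC := by
      rw [Finset.disjoint_left]
      intro m hmA hmC
      have h1 : PA m := (Finset.mem_filter.mp hmA).2
      have h2 : PC m := (Finset.mem_filter.mp hmC).2
      have : m ∈ ({m : ℤ | PA m} ∩ {m : ℤ | PC m}) := ⟨h1, h2⟩
      rw [hAC] at this
      exact this
    have hdBC : Disjoint fB fC := by
      rw [Finset.disjoint_left]
      intro m hmB hmC
      have h1 : PB m := (Finset.mem_filter.mp hmB).2
      have h2 : PC m := (Finset.mem_filter.mp hmC).2
      have : m ∈ ({m : ℤ | PB m} ∩ {m : ℤ | PC m}) := ⟨h1, h2⟩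
      rw [hBC] at this
      exact this
    have hcardsum : fA.card + fB.card + fC.card = (Finset.Icc (1 : ℤ) N).card := by
      rw [← hunion, Finset.card_union_of_disjoint (Finset.disjoint_union_left.mpr ⟨hdAC, hdBC⟩),
        Finset.card_union_of_disjoint hdAB]
    have hcA : fA.card = (⌈((N : ℝ) + 1) / α⌉ - 1).toNat := beatty_count α hα N hN
    have hcB : fB.card = (⌈((N : ℝ) + 1) / β⌉ - 1).toNat := beatty_count β hβ N hN
    have hcC : fC.card = (⌈((N : ℝ) + 1) / γ⌉ - 1).toNat := beatty_count γ hγ N hN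
    have hIcc : (Finset.Icc (1 : ℤ) N).card = N.toNat := by
      rw [Int.card_Icc]; congr 1; omega
    have hposA : 0 < ⌈((N : ℝ) + 1) / α⌉ := Int.ceil_pos.mpr (by positivity)
    have hposB : 0 < ⌈((N : ℝ) + 1) / β⌉ := Int.ceil_pos.mpr (by positivity)
    have hposC : 0 < ⌈((N : ℝ) + 1) / γ⌉ := Int.ceil_pos.mpr (by positivity)
    rw [hcA, hcB, hcC, hIcc] at hcardsum
    omega
  -- Step 2: ceiling identity for M ≥ 2
  have hceil : ∀ M : ℤ, 2 ≤ M →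
      ⌈(M : ℝ) / α⌉ + ⌈(M : ℝ) / β⌉ + ⌈(M : ℝ) / γ⌉ = M + 2 := by
    intro M hM
    have h := hcount (M - 1) (by omega)
    have hcast : ((M - 1 : ℤ) : ℝ) + 1 = (M : ℝ) := by push_cast; ring
    rw [hcast] at h
    omega
  -- Step 3: the densities sum to 1
  set s : ℝ := 1 / α + 1 / β + 1 / γ with hsdef
  clear_value s
  have hbounds : ∀ M : ℤ, 2 ≤ M → (M : ℝ) - 1 < (M : ℝ) * s ∧ (M : ℝ) * s ≤ (M : ℝ) + 2 := by
    intro M hM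
    have hc := hceil M hM
    have hcR : ((⌈(M : ℝ) / α⌉ + ⌈(M : ℝ) / β⌉ + ⌈(M : ℝ) / γ⌉ : ℤ) : ℝ)
        = (M : ℝ) + 2 := by exact_mod_cast congrArg (fun z : ℤ => (z : ℝ)) hc
    push_cast at hcR
    have l1 := Int.le_ceil ((M : ℝ) / α)
    have l2 := Int.le_ceil ((M : ℝ) / β)
    have l3 := Int.le_ceil ((M : ℝ) / γ)
    have u1 := Int.ceil_lt_add_one ((M : ℝ) / α)
    have u2 := Int.ceil_lt_add_one ((M : ℝ) / β)
    have u3 := Int.ceil_lt_add_one ((M : ℝ) / γ)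
    have hms : (M : ℝ) * s = (M : ℝ) / α + (M : ℝ) / β + (M : ℝ) / γ := by
      rw [hsdef]; field_simp
    constructor
    · linarith
    · linarith
  have hs1 : s = 1 := by
    rcases lt_trichotomy s 1 with h | h | h
    · exfalso
      obtain ⟨n, hn⟩ := exists_nat_gt (1 / (1 - s) + 2)
      have h1s : 0 < 1 - s := by linarith
      have hn2 : 2 ≤ (n : ℤ) := by
        have h0 : (0 : ℝ) < 1 / (1 - s) := by positivity
        have : (2 : ℝ) ≤ (n : ℝ) := by linarith
        exact_mod_cast this
      have hb := (hbounds (n : ℤ) hn2).1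
      have hcast : (((n : ℤ) : ℤ) : ℝ) = (n : ℝ) := by push_cast; ring
      rw [hcast] at hb
      have hinv : 1 / (1 - s) * (1 - s) = 1 := by field_simp
      have hm := mul_lt_mul_of_pos_right hn h1s
      nlinarith [hm, hinv]
    · exact h
    · exfalso
      obtain ⟨n, hn⟩ := exists_nat_gt (2 / (s - 1) + 2)
      have h1s : 0 < s - 1 := by linarith
      have hn2 : 2 ≤ (n : ℤ) := by
        have h0 : (0 : ℝ) < 2 / (s - 1) := by positivity
        have : (2 : ℝ) ≤ (n : ℝ) := by linarith
        exact_mod_cast this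
      have hb := (hbounds (n : ℤ) hn2).2
      have hcast : (((n : ℤ) : ℤ) : ℝ) = (n : ℝ) := by push_cast; ring
      rw [hcast] at hb
      have hinv : 2 / (s - 1) * (s - 1) = 2 := by field_simp
      have hm := mul_lt_mul_of_pos_right hn h1s
      nlinarith [hm, hinv]
  -- Step 4: the key inequality
  have hkey : ∀ M : ℤ, 2 ≤ M →
      ((⌈(M : ℝ) / α⌉ : ℝ) - (M : ℝ) / α) + ((⌈(M : ℝ) / β⌉ : ℝ) - (M : ℝ) / β) > 1 := by
    intro M hM
    have hc := hceil M hM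
    have hcR : ((⌈(M : ℝ) / α⌉ + ⌈(M : ℝ) / β⌉ + ⌈(M : ℝ) / γ⌉ : ℤ) : ℝ)
        = (M : ℝ) + 2 := by exact_mod_cast congrArg (fun z : ℤ => (z : ℝ)) hc
    push_cast at hcR
    have u3 := Int.ceil_lt_add_one ((M : ℝ) / γ)
    have hms : (M : ℝ) * s = (M : ℝ) / α + (M : ℝ) / β + (M : ℝ) / γ := by
      rw [hsdef]; field_simp
    rw [hs1, mul_one] at hms
    linarith
  -- Step 5: pigeonhole contradiction
  have hθ : 0 < 1 / α := by positivity
  have hφ : 0 < 1 / β := by positivity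
  have hψ : 0 < 1 / γ := by positivity
  set ε : ℝ := min (1 / α) (min (1 / β) (1 / γ / 2)) with hε
  have hε0 : 0 < ε := lt_min hθ (lt_min hφ (by positivity))
  obtain ⟨N, p, q, hN3, h1, h2⟩ := simul_dirichlet (1 / α) (1 / β) ε hε0
  set M : ℤ := N - 1 with hM
  have hM2 : 2 ≤ M := by omega
  have habs1 := abs_lt.mp h1
  have habs2 := abs_lt.mp h2
  have hMα : (M : ℝ) / α = (N : ℝ) * (1 / α) - 1 / α := by
    rw [hM]; push_cast; field_simp
  have hMβ : (M : ℝ) / β = (N : ℝ) * (1 / β) - 1 / β := by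
    rw [hM]; push_cast; field_simp
  have hεθ : ε ≤ 1 / α := min_le_left _ _
  have hεφ : ε ≤ 1 / β := le_trans (min_le_right _ _) (min_le_left _ _)
  have hεψ : ε ≤ 1 / γ / 2 := le_trans (min_le_right _ _) (min_le_right _ _)
  have hcp : ⌈(M : ℝ) / α⌉ ≤ p := by
    apply Int.ceil_le.mpr
    rw [hMα]; linarith
  have hcq : ⌈(M : ℝ) / β⌉ ≤ q := by
    apply Int.ceil_le.mpr
    rw [hMβ]; linarith
  have hk := hkey M hM2
  have hsum1 : (1 : ℝ) / α + 1 / β + 1 / γ = 1 := hsdef ▸ hs1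
  have hA : ((⌈(M : ℝ) / α⌉ : ℝ) - (M : ℝ) / α) < 1 / α + ε := by
    have : ((⌈(M : ℝ) / α⌉ : ℝ)) ≤ (p : ℝ) := by exact_mod_cast hcp
    rw [hMα] at *
    linarith
  have hB : ((⌈(M : ℝ) / β⌉ : ℝ) - (M : ℝ) / β) < 1 / β + ε := by
    have : ((⌈(M : ℝ) / β⌉ : ℝ)) ≤ (q : ℝ) := by exact_mod_cast hcq
    rw [hMβ] at *
    linarith
  linarith
end

section
/- (Bonse's inequality) If p_1 < p_2 < p_3 < ... are the primes in increasing order, then for all n ≥ 4, p_{n+1}² < p_1 · p_2 · ⋯ · p_n. -/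
lemma nth_prime_succ_le_two_mul (n : ℕ) :
    Nat.nth Nat.Prime (n + 1) ≤ 2 * Nat.nth Nat.Prime n := by
  have hp := Nat.prime_nth_prime n
  obtain ⟨p, hp', h1, h2⟩ := Nat.exists_prime_lt_and_le_two_mul (Nat.nth Nat.Prime n) hp.ne_zero
  have : Nat.nth Nat.Prime (n + 1) ≤ p := by
    by_contra h
    push_neg at h
    exact absurd (Nat.le_nth_of_lt_nth_succ h hp') (not_le.2 h1)
  omega

lemma nth_prime_ge (n : ℕ) : n + 2 ≤ Nat.nth Nat.Prime n := by
  induction n with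
  | zero => simp
  | succ k ih =>
    have h := (Nat.nth_lt_nth (p := Nat.Prime) Nat.infinite_setOf_prime (k := k) (n := k + 1)).2 (by omega)
    omega

/-- Bonse's inequality: `p_{n+1}² < p_1 p_2 ⋯ p_n` for `n ≥ 4`, where `p_k` is the
`k`-th prime (so `Nat.nth Nat.Prime (k-1)` in 0-indexed form). -/
theorem bonse_inequality (n : ℕ) (hn : 4 ≤ n) :
    (Nat.nth Nat.Prime n) ^ 2 < ∏ i ∈ Finset.range n, Nat.nth Nat.Prime i := by
  induction n with
  | zero => omega
  | succ m ih =>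
    rcases Nat.lt_or_ge m 4 with hm | hm
    ·
      have hm3 : m = 3 := by omega
      subst hm3
      have h2 : Nat.nth Nat.Prime 2 = 5 := by
        have := Nat.nth_count (p := Nat.Prime) (n := 5) (by norm_num)
        simpa [show Nat.count Nat.Prime 5 = 2 by decide] using this
      have h3 : Nat.nth Nat.Prime 3 = 7 := by
        have := Nat.nth_count (p := Nat.Prime) (n := 7) (by norm_num)
        simpa [show Nat.count Nat.Prime 7 = 3 by decide] using this
      have h4 : Nat.nth Nat.Prime 4 = 11 := by
        have := Nat.nth_count (p := Nat.Prime) (n := 11) (by norm_num)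
        simpa [show Nat.count Nat.Prime 11 = 4 by decide] using this
      rw [Finset.prod_range_succ, Finset.prod_range_succ, Finset.prod_range_succ,
        Finset.prod_range_succ, Finset.prod_range_zero]
      norm_num [h2, h3, h4]
    · have IH := ih hm
      rw [Finset.prod_range_succ]
      have hb := nth_prime_succ_le_two_mul m
      have hge : 6 ≤ Nat.nth Nat.Prime m := by have := nth_prime_ge m; omega
      calc (Nat.nth Nat.Prime (m + 1)) ^ 2
          ≤ (2 * Nat.nth Nat.Prime m) ^ 2 := Nat.pow_le_pow_left hb 2
        _ = 4 * (Nat.nth Nat.Prime m) ^ 2 := by ring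
        _ < Nat.nth Nat.Prime m * (Nat.nth Nat.Prime m) ^ 2 := by
            have hx : 0 < Nat.nth Nat.Prime m ^ 2 := by positivity
            nlinarith
        _ ≤ Nat.nth Nat.Prime m * (∏ i ∈ Finset.range m, Nat.nth Nat.Prime i) := by
            apply Nat.mul_le_mul_left
            exact IH.le
        _ = (∏ i ∈ Finset.range m, Nat.nth Nat.Prime i) * Nat.nth Nat.Prime m := by ring
end

section
/- (Lamé's theorem) The number of division steps performed by the Euclidean algorithm on a pair of positive integers a > b is at most five times the number of decimal digits of b. -/
/-- Number of division steps performed by the Euclidean algorithm on `(a, b)`. -/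
def euclidSteps : ℕ → ℕ → ℕ
  | _, 0 => 0
  | a, b + 1 => euclidSteps (b + 1) (a % (b + 1)) + 1
termination_by a b => b
decreasing_by exact Nat.lt_succ_of_le (Nat.le_of_lt_succ (Nat.mod_lt _ (Nat.succ_pos b)))

lemma euclid_fib (b : ℕ) : ∀ a, 0 < b → b < a →
    Nat.fib (euclidSteps a b + 1) ≤ b ∧ Nat.fib (euclidSteps a b + 2) ≤ a := by
  induction b using Nat.strong_induction_on with
  | _ b ih =>
    intro a hb hab
    obtain ⟨m, rfl⟩ := Nat.exists_eq_succ_of_ne_zero hb.ne'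
    rw [euclidSteps]
    rcases Nat.eq_zero_or_pos (a % (m + 1)) with h0 | hpos
    · rw [h0, euclidSteps]
      constructor
      · simpa using Nat.succ_le_succ (Nat.zero_le m)
      · show Nat.fib 3 ≤ a
        simp [Nat.fib]
        omega
    · have hrb : a % (m + 1) < m + 1 := Nat.mod_lt _ (Nat.succ_pos m)
      obtain ⟨h1, h2⟩ := ih _ hrb (m + 1) hpos hrb
      set t := euclidSteps (m + 1) (a % (m + 1)) with ht
      refine ⟨h2, ?_⟩
      have e : Nat.fib (t + 3) = Nat.fib (t + 1) + Nat.fib (t + 2) := Nat.fib_add_two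
      have ha : m + 1 + a % (m + 1) ≤ a := by
        have hd := Nat.div_add_mod a (m + 1)
        have h1 : 1 ≤ a / (m + 1) := (Nat.one_le_div_iff (Nat.succ_pos m)).mpr hab.le
        nlinarith
      calc Nat.fib (t + 1 + 2) = Nat.fib (t + 1) + Nat.fib (t + 2) := e
        _ ≤ a % (m + 1) + (m + 1) := Nat.add_le_add h1 h2
        _ ≤ a := by omega

lemma fib_step (k : ℕ) : 10 * Nat.fib (k + 2) ≤ Nat.fib (k + 7) := by
  have e3 : Nat.fib (k + 3) = Nat.fib (k + 1) + Nat.fib (k + 2) := Nat.fib_add_two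
  have e4 : Nat.fib (k + 4) = Nat.fib (k + 2) + Nat.fib (k + 3) := Nat.fib_add_two
  have e5 : Nat.fib (k + 5) = Nat.fib (k + 3) + Nat.fib (k + 4) := Nat.fib_add_two
  have e6 : Nat.fib (k + 6) = Nat.fib (k + 4) + Nat.fib (k + 5) := Nat.fib_add_two
  have e7 : Nat.fib (k + 7) = Nat.fib (k + 5) + Nat.fib (k + 6) := Nat.fib_add_two
  have e2 : Nat.fib (k + 2) = Nat.fib k + Nat.fib (k + 1) := Nat.fib_add_two
  have hm : Nat.fib k ≤ Nat.fib (k + 1) := Nat.fib_le_fib_succ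
  omega

lemma pow_le_fib (n : ℕ) : 10 ^ n ≤ Nat.fib (5 * n + 2) := by
  induction n with
  | zero => simp
  | succ n ih =>
    have h := fib_step (5 * n)
    calc 10 ^ (n + 1) = 10 * 10 ^ n := by ring
      _ ≤ 10 * Nat.fib (5 * n + 2) := by omega
      _ ≤ Nat.fib (5 * n + 7) := h
      _ = Nat.fib (5 * (n + 1) + 2) := by ring_nf

/-- Lamé's theorem: the Euclidean algorithm on positive integers `a > b` takes at most
five times as many division steps as `b` has decimal digits. -/
theorem lame_theorem (a b : ℕ) (hb : 0 < b) (hab : b < a) :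
    euclidSteps a b ≤ 5 * (Nat.digits 10 b).length := by
  obtain ⟨h1, -⟩ := euclid_fib b a hb hab
  set d := (Nat.digits 10 b).length with hd
  have hlt : b < 10 ^ d := Nat.lt_base_pow_length_digits (by norm_num)
  by_contra h
  push_neg at h
  have hmono : Nat.fib (5 * d + 2) ≤ Nat.fib (euclidSteps a b + 1) :=
    Nat.fib_mono (by omega)
  have := pow_le_fib d
  omega
end

section
/- In the fair gambler's ruin problem with unequal stakes, where A wins each game with probability p, loses with probability q = 1-p, stakes are α and β with pβ = qα, and fortunes are a ≥ α, b ≥ β (all positive integers), the probability y_a that A is ruined (A's capital falls below α before B's falls below β) satisfies (b - β + 1)/(a + b - β + 1) ≤ y_a ≤ b/(a + b - α + 1). -/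
/-- Discrete maximum principle for the ruin recursion: a "harmonic" function that is
nonpositive on both boundary strips is nonpositive everywhere. -/
lemma gamblers_ruin_max_principle (p q : ℝ) (hp : 0 < p) (hq : 0 < q)
    (hpq : p + q = 1) (α β N : ℕ) (hα : 0 < α) (g : ℕ → ℝ)
    (hrec : ∀ x, α ≤ x → x ≤ N → g x = p * g (x + β) + q * g (x - α))
    (hbd1 : ∀ x, x < α → g x ≤ 0)
    (hbd2 : ∀ x, N < x → x ≤ N + β → g x ≤ 0) :
    ∀ x, x ≤ N + β → g x ≤ 0 := by
  have hne : (Finset.range (N + β + 1)).Nonempty := ⟨0, by simp⟩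
  set M := (Finset.range (N + β + 1)).sup' hne g with hM
  have hMx : ∀ x, x ≤ N + β → g x ≤ M := fun x hx =>
    Finset.le_sup' g (Finset.mem_range.2 (Nat.lt_succ_of_le hx))
  suffices hM0 : M ≤ 0 by
    intro x hx; exact (hMx x hx).trans hM0
  obtain ⟨x₀, hx₀mem, hx₀⟩ := Finset.exists_mem_eq_sup' hne g
  have hex : ∃ x, x ≤ N + β ∧ g x = M :=
    ⟨x₀, Nat.lt_succ_iff.1 (Finset.mem_range.1 hx₀mem), hx₀.symm⟩
  obtain ⟨hm1, hm2⟩ := Nat.find_spec hex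
  set m := Nat.find hex with hm
  rcases lt_or_ge m α with h1 | h1
  · exact hm2 ▸ hbd1 m h1
  rcases le_or_gt m N with h2 | h2
  · exfalso
    have hrecm := hrec m h1 h2
    have h3 : g (m + β) ≤ M := hMx _ (by omega)
    have h4 : g (m - α) ≤ M := hMx _ (by omega)
    have h5 : M ≤ g (m - α) := by
      by_contra hcon
      push_neg at hcon
      have hb : p * g (m + β) ≤ p * M := mul_le_mul_of_nonneg_left h3 hp.le
      have hc : q * g (m - α) < q * M := mul_lt_mul_of_pos_left hcon hq
      have hd : p * M + q * M = M := by rw [← add_mul, hpq, one_mul]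
      linarith [hm2, hrecm]
    have h6 : g (m - α) = M := le_antisymm h4 h5
    exact Nat.find_min hex (show m - α < m by omega) ⟨by omega, h6⟩
  · exact hm2 ▸ hbd2 m h2 hm1

/-- Markov/Uspensky bounds on the ruin probability in a fair gambler's ruin game with
unequal stakes `α, β` and fortunes `a, b`:
`(b - β + 1)/(a + b - β + 1) ≤ y a ≤ b/(a + b - α + 1)`.
Here `y x` is the probability that A is ruined starting with capital `x`, characterized
as the bounded solution of the ruin recursion with its boundary conditions. -/
theorem gamblers_ruin_unequal_stakes (p q : ℝ) (α β a b : ℕ)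
    (hp : 0 < p) (hp1 : p < 1) (hq : q = 1 - p)
    (hα : 0 < α) (hβ : 0 < β) (hfair : p * (β : ℝ) = q * (α : ℝ))
    (ha : α ≤ a) (hb : β ≤ b)
    (y : ℕ → ℝ) (hybd : ∀ x, 0 ≤ y x ∧ y x ≤ 1)
    (hruinA : ∀ x, x < α → y x = 1)
    (hruinB : ∀ x, a + b - β < x → y x = 0)
    (hrec : ∀ x, α ≤ x → x ≤ a + b - β → y x = p * y (x + β) + q * y (x - α)) :
    ((b : ℝ) - β + 1) / ((a : ℝ) + b - β + 1) ≤ y a ∧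
      y a ≤ (b : ℝ) / ((a : ℝ) + b - α + 1) := by
  subst hq
  have hq0 : (0:ℝ) < 1 - p := by linarith
  set N := a + b - β with hN
  have hNβ : N + β = a + b := by omega
  have haN : a ≤ N := by omega
  have hD1 : (0:ℝ) < (a:ℝ) + b - α + 1 := by
    have : (α:ℝ) ≤ a := Nat.cast_le.2 ha
    have : (0:ℝ) ≤ b := Nat.cast_nonneg b
    linarith
  have hD2 : (0:ℝ) < (a:ℝ) + b - β + 1 := by
    have : (β:ℝ) ≤ b := Nat.cast_le.2 hb
    have : (0:ℝ) ≤ a := Nat.cast_nonneg a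
    linarith
  constructor
  · -- lower bound : g x := (C - x) - D * y x with C = D = a+b-β+1
    set D : ℝ := (a:ℝ) + b - β + 1 with hDdef
    have key : ∀ x, x ≤ N + β → (D - x) - D * y x ≤ 0 := by
      apply gamblers_ruin_max_principle p (1 - p) hp hq0 (by ring) α β N hα
      · intro x hx1 hx2
        have hy := hrec x hx1 hx2
        have hc : ((x - α : ℕ):ℝ) = (x:ℝ) - α := Nat.cast_sub hx1
        rw [hy, hc]
        push_cast
        linear_combination hfair
      · intro x hx
        have hy := hruinA x hx
        rw [hy]
        have : (0:ℝ) ≤ x := Nat.cast_nonneg x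
        linarith
      · intro x hx1 hx2
        have hy := hruinB x hx1
        rw [hy]
        have hx' : N + 1 ≤ x := hx1
        have : ((N:ℕ):ℝ) + 1 ≤ (x:ℝ) := by exact_mod_cast Nat.succ_le_of_lt hx1
        have hNc : ((N:ℕ):ℝ) = (a:ℝ) + b - β := by
          rw [hN]; push_cast [Nat.cast_sub (by omega : β ≤ a + b)]; ring
        rw [hNc] at this
        linarith
    have := key a (by omega)
    rw [div_le_iff₀ hD2]
    linarith
  · -- upper bound : g x := D * y x - (C - x) with C = a+b, D = a+b-α+1
    set D : ℝ := (a:ℝ) + b - α + 1 with hDdef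
    set C : ℝ := (a:ℝ) + b with hCdef
    have key : ∀ x, x ≤ N + β → D * y x - (C - x) ≤ 0 := by
      apply gamblers_ruin_max_principle p (1 - p) hp hq0 (by ring) α β N hα
      · intro x hx1 hx2
        have hy := hrec x hx1 hx2
        have hc : ((x - α : ℕ):ℝ) = (x:ℝ) - α := Nat.cast_sub hx1
        rw [hy, hc]
        push_cast
        linear_combination -hfair
      · intro x hx
        have hy := hruinA x hx
        rw [hy]
        have hx' : (x:ℝ) ≤ (α:ℝ) - 1 := by
          have : (x:ℝ) + 1 ≤ α := by exact_mod_cast Nat.succ_le_of_lt hx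
          linarith
        have hαa : (α:ℝ) ≤ a := Nat.cast_le.2 ha
        have hb0 : (0:ℝ) ≤ b := Nat.cast_nonneg b
        simp only [hDdef, hCdef]
        linarith
      · intro x hx1 hx2
        have hy := hruinB x hx1
        rw [hy]
        have : (x:ℝ) ≤ ((N + β : ℕ):ℝ) := Nat.cast_le.2 hx2
        rw [hNβ] at this
        push_cast at this
        simp only [hCdef]
        linarith
    have := key a (by omega)
    rw [le_div_iff₀ hD1]
    linarith
end
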